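/- The AUROC-OVA index is not invariant under equivalence of confusion matrices: there exist an integer C ≥ 3 and two equivalent C-class confusion matrices M and M' (satisfying m_ij/n_i = m'_ij/n'_i for all i, j) such that ρ_a(M) ≠ ρ_a(M'). -/

import Mathlib

open Finset

/-!
Rescaling a row of a confusion matrix keeps every row-normalised rate `m_ij / n_i`, but the
false-positive rate `(k_i - m_ii) / (n - n_i)` of class `i` pools the off-diagonal entries of
column `i` over rows with different totals, so it is not a function of those rates. In the matrix
`[[1,1,0],[0,1,0],[0,0,1]]`, doubling the first row raises the false-positive rate of the second
class from `1/3` to `2/5`, and `ρ_a` drops from `31/36` to `17/20`.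
-/

/-- The AUROC-OVA index `ρ_a` of a `C`-class confusion matrix `m`, where
`n_i` is the `i`-th row sum, `k_i` the `i`-th column sum and `n` the total. -/
noncomputable def rhoOVA (C : ℕ) (m : Fin C → Fin C → ℕ) : ℝ :=
  (1 / (2 * (C : ℝ))) *
    ∑ i, (1 + (m i i : ℝ) / (∑ j, (m i j : ℝ))
      - ((∑ j, (m j i : ℝ)) - (m i i : ℝ)) /
          ((∑ a, ∑ b, (m a b : ℝ)) - ∑ j, (m i j : ℝ)))

section ScaleRow

variable {ι : Type*} [Fintype ι] [DecidableEq ι]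

def scaleRow (m : ι → ι → ℕ) (r : ι) (c : ℕ) : ι → ι → ℕ :=
  fun i j => if i = r then c * m i j else m i j

theorem sum_scaleRow_pos {m : ι → ι → ℕ} (hm : ∀ i, 0 < ∑ j, m i j) (r : ι) {c : ℕ}
    (hc : 0 < c) (i : ι) : 0 < ∑ j, scaleRow m r c i j := by
  unfold scaleRow
  split_ifs
  · rw [← mul_sum]
    exact Nat.mul_pos hc (hm i)
  · exact hm i

theorem scaleRow_div_sum (m : ι → ι → ℕ) (r : ι) {c : ℕ} (hc : 0 < c) (i j : ι) :
    (scaleRow m r c i j : ℝ) / ∑ l, (scaleRow m r c i l : ℝ)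
      = (m i j : ℝ) / ∑ l, (m i l : ℝ) := by
  unfold scaleRow
  split_ifs
  · push_cast
    rw [← mul_sum, mul_div_mul_left _ _ (by positivity)]
  · rfl

end ScaleRow

def exampleConfusion : Fin 3 → Fin 3 → ℕ := ![![1, 1, 0], ![0, 1, 0], ![0, 0, 1]]

theorem sum_exampleConfusion_pos (i : Fin 3) : 0 < ∑ j, exampleConfusion i j := by
  fin_cases i <;> simp [exampleConfusion, Fin.sum_univ_three]

theorem rhoOVA_exampleConfusion : rhoOVA 3 exampleConfusion = 31 / 36 := by
  simp only [rhoOVA, exampleConfusion, Fin.sum_univ_three, Matrix.cons_val_zero,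
    Matrix.cons_val_one, Matrix.cons_val_two, Matrix.head_cons, Matrix.tail_cons]
  norm_num

theorem rhoOVA_scaleRow_exampleConfusion :
    rhoOVA 3 (scaleRow exampleConfusion 0 2) = 17 / 20 := by
  simp only [rhoOVA, scaleRow, exampleConfusion, Fin.sum_univ_three, Matrix.cons_val_zero,
    Matrix.cons_val_one, Matrix.cons_val_two, Matrix.head_cons, Matrix.tail_cons]
  norm_num [Fin.ext_iff]

/-- AUROC-OVA is not invariant under equivalence of confusion matrices:
there exist `C ≥ 3` and equivalent `C`-class confusion matrices `M`, `M'` with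
`ρ_a(M) ≠ ρ_a(M')`. -/
theorem rhoOVA_not_invariant_equiv :
    ∃ (C : ℕ), 3 ≤ C ∧ ∃ m m' : Fin C → Fin C → ℕ,
      (∀ i, 0 < ∑ j, m i j) ∧ (∀ i, 0 < ∑ j, m' i j) ∧
      (∀ i j, (m i j : ℝ) / (∑ l, (m i l : ℝ))
        = (m' i j : ℝ) / (∑ l, (m' i l : ℝ))) ∧
      rhoOVA C m ≠ rhoOVA C m' := by
  refine ⟨3, le_rfl, exampleConfusion, scaleRow exampleConfusion 0 2,
    sum_exampleConfusion_pos, sum_scaleRow_pos sum_exampleConfusion_pos 0 two_pos,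
    fun i j => (scaleRow_div_sum exampleConfusion 0 two_pos i j).symm, ?_⟩
  rw [rhoOVA_exampleConfusion, rhoOVA_scaleRow_exampleConfusion]
  norm_num
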